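/- arXiv:0904.1635 — 2 statements merged into one kernel-verified Lean document; each statement's English description precedes it below -/
import Mathlib

section
/- A proper ideal M of an LA-semigroup S with left identity e is a minimal ideal if and only if M = a²M for all a in S, where a²M = {(aa)m : m ∈ M}. -/
/-!
For every `a`, the set `a²M` is again an ideal contained in `M`: it absorbs left factors by
`s((aa)m) = (aa)(sm)` and right factors by the paramedial law `((aa)m)s = (sm)(aa) = (aa)(ms)`.
So minimality of `M` forces `M = a²M`. Conversely, if `M = i²M` for some `i` in an ideal `I ⊆ M`,
then `M = (ii)M ⊆ I`, because `ii ∈ I` and `I` absorbs right factors.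
-/

section LeftInvertive

variable {S : Type*} [Mul S]

theorem mul_mul_mul_comm_of_leftInvertive (hli : ∀ a b c : S, a * b * c = c * b * a)
    (a b c d : S) : a * b * (c * d) = a * c * (b * d) := by
  rw [hli a b (c * d), hli c d b, hli (b * d) c a]

theorem mul_left_comm_of_leftInvertive (hli : ∀ a b c : S, a * b * c = c * b * a)
    {e : S} (he : ∀ x : S, e * x = x) (a b c : S) : a * (b * c) = b * (a * c) := by
  calc a * (b * c) = e * a * (b * c) := by rw [he]
    _ = e * b * (a * c) := mul_mul_mul_comm_of_leftInvertive hli _ _ _ _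
    _ = b * (a * c) := by rw [he]

theorem mul_mul_mul_rev_of_leftInvertive (hli : ∀ a b c : S, a * b * c = c * b * a)
    {e : S} (he : ∀ x : S, e * x = x) (a b c d : S) : a * b * (c * d) = d * c * (b * a) := by
  have mul_e : ∀ x y : S, x * y * e = y * x := fun x y => by rw [hli, he]
  calc a * b * (c * d) = b * a * e * (c * d) := by rw [mul_e]
    _ = c * d * e * (b * a) := hli _ _ _
    _ = d * c * (b * a) := by rw [mul_e]

/-- The set `a²M`. -/
def sqMul (a : S) (M : Set S) : Set S := {x | ∃ m ∈ M, x = a * a * m}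

theorem sqMul_nonempty (a : S) {M : Set S} (hM : M.Nonempty) : (sqMul a M).Nonempty :=
  let ⟨m, hm⟩ := hM
  ⟨a * a * m, m, hm, rfl⟩

theorem sqMul_subset (a : S) {M : Set S} (hMl : ∀ s : S, ∀ m ∈ M, s * m ∈ M) :
    sqMul a M ⊆ M := by
  rintro _ ⟨m, hm, rfl⟩
  exact hMl _ m hm

theorem mul_mem_sqMul_left (hli : ∀ a b c : S, a * b * c = c * b * a)
    {e : S} (he : ∀ x : S, e * x = x) {a : S} {M : Set S}
    (hMl : ∀ s : S, ∀ m ∈ M, s * m ∈ M) (s : S) {x : S} (hx : x ∈ sqMul a M) :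
    s * x ∈ sqMul a M := by
  obtain ⟨m, hm, rfl⟩ := hx
  exact ⟨s * m, hMl s m hm, mul_left_comm_of_leftInvertive hli he _ _ _⟩

theorem mul_mem_sqMul_right (hli : ∀ a b c : S, a * b * c = c * b * a)
    {e : S} (he : ∀ x : S, e * x = x) {a : S} {M : Set S}
    (hMr : ∀ m ∈ M, ∀ s : S, m * s ∈ M) {x : S} (hx : x ∈ sqMul a M) (s : S) :
    x * s ∈ sqMul a M := by
  obtain ⟨m, hm, rfl⟩ := hx
  refine ⟨m * s, hMr m hm s, ?_⟩
  rw [hli, mul_mul_mul_rev_of_leftInvertive hli he]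

theorem subset_of_eq_sqMul {I M : Set S} {i : S} (hi : i ∈ I)
    (hIr : ∀ i ∈ I, ∀ s : S, i * s ∈ I) (hM : M = sqMul i M) : M ⊆ I := by
  rw [hM]
  rintro _ ⟨m, -, rfl⟩
  exact hIr _ (hIr i hi i) m

end LeftInvertive

theorem la_minimal_ideal_iff_general {S : Type*} [Mul S]
    (hli : ∀ a b c : S, (a * b) * c = (c * b) * a)
    (e : S) (he : ∀ x : S, e * x = x)
    (M : Set S) (hMne : M.Nonempty)
    (hMl : ∀ s : S, ∀ m ∈ M, s * m ∈ M)
    (hMr : ∀ m ∈ M, ∀ s : S, m * s ∈ M) :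
    (∀ I : Set S, I.Nonempty → (∀ s : S, ∀ i ∈ I, s * i ∈ I) →
        (∀ i ∈ I, ∀ s : S, i * s ∈ I) → I ⊆ M → I = M) ↔
    (∀ a : S, M = {x : S | ∃ m ∈ M, x = (a * a) * m}) := by
  constructor
  · intro hmin a
    exact (hmin (sqMul a M) (sqMul_nonempty a hMne)
      (fun s _ => mul_mem_sqMul_left hli he hMl s) (fun _ hx => mul_mem_sqMul_right hli he hMr hx)
      (sqMul_subset a hMl)).symm
  · rintro hsq I ⟨i, hi⟩ - hIr hIM
    exact hIM.antisymm (subset_of_eq_sqMul hi hIr (hsq i))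

/-- A proper ideal M of an LA-semigroup with left identity is minimal
iff M = a²M for all a. -/
theorem la_minimal_ideal_iff {S : Type*} [Mul S]
    (hli : ∀ a b c : S, (a * b) * c = (c * b) * a)
    (e : S) (he : ∀ x : S, e * x = x)
    (M : Set S) (hMne : M.Nonempty)
    (hMl : ∀ s : S, ∀ m ∈ M, s * m ∈ M)
    (hMr : ∀ m ∈ M, ∀ s : S, m * s ∈ M)
    (hMproper : M ≠ Set.univ) :
    (∀ I : Set S, I.Nonempty → (∀ s : S, ∀ i ∈ I, s * i ∈ I) →
        (∀ i ∈ I, ∀ s : S, i * s ∈ I) → I ⊆ M → I = M) ↔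
    (∀ a : S, M = {x : S | ∃ m ∈ M, x = (a * a) * m}) :=
  la_minimal_ideal_iff_general hli e he M hMne hMl hMr
end

section
/- Let S be an LA-semigroup with left identity e. A left ideal P of S is quasi-prime if and only if for all a, b in S, a(Sb) ⊆ P implies a ∈ P or b ∈ P. -/
/-!
For `a, b ∈ S` the sets `Sa` and `Sb` are left ideals containing `a` and `b` (using the left
identity), and the medial law together with `x(yz) = y(xz)` gives `(sa)(tb) = a((st)b)`, so
`(Sa)(Sb) ⊆ a(Sb)`; this yields the forward direction. Conversely, if `AB ⊆ P` and some `a ∈ A`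
lies outside `P`, then for every `b ∈ B` the set `a(Sb)` lies in `AB ⊆ P`, forcing `b ∈ P`.
-/

def LALeftIdeal {S : Type*} [Mul S] (I : Set S) : Prop :=
  I.Nonempty ∧ ∀ s : S, ∀ i ∈ I, s * i ∈ I

def LAsetMul {S : Type*} [Mul S] (A B : Set S) : Set S :=
  {x : S | ∃ a ∈ A, ∃ b ∈ B, x = a * b}

section LeftInvertive

variable {S : Type*} [Mul S] (hli : ∀ a b c : S, (a * b) * c = (c * b) * a)
include hli

theorem LA.mul_mul_mul_comm (a b c d : S) : (a * b) * (c * d) = (a * c) * (b * d) :=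
  calc (a * b) * (c * d) = ((c * d) * b) * a := hli a b (c * d)
    _ = ((b * d) * c) * a := by rw [hli c d b]
    _ = (a * c) * (b * d) := hli (b * d) c a

variable {e : S} (he : ∀ x : S, e * x = x)
include he

theorem LA.mul_left_comm (x y z : S) : x * (y * z) = y * (x * z) :=
  calc x * (y * z) = (e * x) * (y * z) := by rw [he]
    _ = (e * y) * (x * z) := LA.mul_mul_mul_comm hli e x y z
    _ = y * (x * z) := by rw [he]

theorem LA.mul_mul_eq_mul_mul_right (x s a : S) : x * (s * a) = ((s * e) * x) * a :=
  calc x * (s * a) = s * (x * a) := LA.mul_left_comm hli he x s a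
    _ = s * ((a * x) * e) := by rw [← hli e x a, he]
    _ = (a * x) * (s * e) := LA.mul_left_comm hli he s (a * x) e
    _ = ((s * e) * x) * a := hli a x (s * e)

theorem LA.laLeftIdeal_range_mul_right (a : S) : LALeftIdeal (Set.range (· * a)) := by
  refine ⟨⟨a, e, he a⟩, ?_⟩
  rintro t _ ⟨s, rfl⟩
  exact ⟨(s * e) * t, (LA.mul_mul_eq_mul_mul_right hli he t s a).symm⟩

theorem LA.laSetMul_range_mul_right_subset (a b : S) :
    LAsetMul (Set.range (· * a)) (Set.range (· * b)) ⊆ {x : S | ∃ s : S, x = a * (s * b)} := by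
  rintro _ ⟨_, ⟨s, rfl⟩, _, ⟨t, rfl⟩, rfl⟩
  exact ⟨s * t, by rw [LA.mul_mul_mul_comm hli s a t b, LA.mul_left_comm hli he (s * t) a b]⟩

theorem LA.mem_or_mem_of_quasiPrime {P : Set S}
    (hP : ∀ A B : Set S, LALeftIdeal A → LALeftIdeal B → LAsetMul A B ⊆ P → A ⊆ P ∨ B ⊆ P)
    {a b : S} (hab : {x : S | ∃ s : S, x = a * (s * b)} ⊆ P) : a ∈ P ∨ b ∈ P := by
  have hAB := (LA.laSetMul_range_mul_right_subset hli he a b).trans hab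
  rcases hP _ _ (LA.laLeftIdeal_range_mul_right hli he a)
      (LA.laLeftIdeal_range_mul_right hli he b) hAB with hA | hB
  · exact Or.inl (hA ⟨e, he a⟩)
  · exact Or.inr (hB ⟨e, he b⟩)

end LeftInvertive

theorem LA.subset_or_subset_of_mem_or_mem {S : Type*} [Mul S] {P A B : Set S}
    (hP : ∀ a b : S, {x : S | ∃ s : S, x = a * (s * b)} ⊆ P → a ∈ P ∨ b ∈ P)
    (hB : ∀ s : S, ∀ b ∈ B, s * b ∈ B) (hAB : LAsetMul A B ⊆ P) : A ⊆ P ∨ B ⊆ P := by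
  refine or_iff_not_imp_left.mpr fun hA b hb => ?_
  obtain ⟨a, ha, haP⟩ := Set.not_subset.mp hA
  have hSb : {x : S | ∃ s : S, x = a * (s * b)} ⊆ P := by
    rintro _ ⟨s, rfl⟩
    exact hAB ⟨a, ha, s * b, hB s b hb, rfl⟩
  exact (hP a b hSb).resolve_left haP

theorem la_quasi_prime_iff_general {S : Type*} [Mul S]
    (hli : ∀ a b c : S, (a * b) * c = (c * b) * a)
    (e : S) (he : ∀ x : S, e * x = x)
    (P : Set S) :
    (∀ A B : Set S, LALeftIdeal A → LALeftIdeal B → LAsetMul A B ⊆ P →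
        A ⊆ P ∨ B ⊆ P) ↔
    (∀ a b : S, {x : S | ∃ s : S, x = a * (s * b)} ⊆ P → a ∈ P ∨ b ∈ P) :=
  ⟨fun hP _ _ => LA.mem_or_mem_of_quasiPrime hli he hP,
    fun hP _ _ _ hB => LA.subset_or_subset_of_mem_or_mem hP hB.2⟩

/-- A left ideal P of an LA-semigroup with left identity is quasi-prime
iff a(Sb) ⊆ P implies a ∈ P or b ∈ P. -/
theorem la_quasi_prime_iff {S : Type*} [Mul S]
    (hli : ∀ a b c : S, (a * b) * c = (c * b) * a)
    (e : S) (he : ∀ x : S, e * x = x)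
    (P : Set S) (hP : LALeftIdeal P) :
    (∀ A B : Set S, LALeftIdeal A → LALeftIdeal B → LAsetMul A B ⊆ P →
        A ⊆ P ∨ B ⊆ P) ↔
    (∀ a b : S, {x : S | ∃ s : S, x = a * (s * b)} ⊆ P → a ∈ P ∨ b ∈ P) :=
  la_quasi_prime_iff_general hli e he P
end
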